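/- For the negation operator ∼ on continuous μ-calculus formulas (defined with ∼ηx.φ := η̄x.∼φ[¬x/x]), every μ_c-logic L proves (∼φ ∧ φ) ↔ ⊥ and (∼φ ∨ φ) ↔ ⊤. -/

import Mathlib

/-- Formulas of the modal μ-calculus in negation normal form. -/
inductive Formula : Type
  | atom : ℕ → Formula
  | natom : ℕ → Formula
  | or : Formula → Formula → Formula
  | and : Formula → Formula → Formula
  | dia : Formula → Formula
  | box : Formula → Formula
  | mu : ℕ → Formula → Formula
  | nu : ℕ → Formula → Formula
  deriving DecidableEq

namespace Formula

/-- free variables -/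
def fv : Formula → Finset ℕ
  | atom p => {p}
  | natom p => {p}
  | or φ ψ => fv φ ∪ fv ψ
  | and φ ψ => fv φ ∪ fv ψ
  | dia φ => fv φ
  | box φ => fv φ
  | mu x φ => fv φ \ {x}
  | nu x φ => fv φ \ {x}

/-- bound variables -/
def bv : Formula → Finset ℕ
  | atom _ => ∅
  | natom _ => ∅
  | or φ ψ => bv φ ∪ bv ψ
  | and φ ψ => bv φ ∪ bv ψ
  | dia φ => bv φ
  | box φ => bv φ
  | mu x φ => insert x (bv φ)
  | nu x φ => insert x (bv φ)

/-- the multiset of variables bound by binders (with multiplicity) -/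
def binders : Formula → Multiset ℕ
  | atom _ => 0
  | natom _ => 0
  | or φ ψ => binders φ + binders ψ
  | and φ ψ => binders φ + binders ψ
  | dia φ => binders φ
  | box φ => binders φ
  | mu x φ => x ::ₘ binders φ
  | nu x φ => x ::ₘ binders φ

/-- negation, keeping the variables in `X` fixed (used under fixpoint binders, where
`∼ηx.φ := η̄x.∼φ[¬x/x]`, so that the double negation on `x` cancels). -/
def negF : Finset ℕ → Formula → Formula
  | X, atom p => if p ∈ X then atom p else natom p
  | X, natom p => if p ∈ X then natom p else atom p
  | X, or φ ψ => and (negF X φ) (negF X ψ)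
  | X, and φ ψ => or (negF X φ) (negF X ψ)
  | X, dia φ => box (negF X φ)
  | X, box φ => dia (negF X φ)
  | X, mu x φ => nu x (negF (insert x X) φ)
  | X, nu x φ => mu x (negF (insert x X) φ)

/-- the negation operator `∼` on negation normal forms -/
def neg : Formula → Formula := negF ∅

/-- substitution of `ψ` for the variable `x` (formulas are assumed tidy, so that
no capture occurs; at negative occurrences the negation of `ψ` is substituted). -/
def subst : Formula → ℕ → Formula → Formula
  | atom p, x, ψ => if p = x then ψ else atom p
  | natom p, x, ψ => if p = x then neg ψ else natom p
  | or φ₁ φ₂, x, ψ => or (subst φ₁ x ψ) (subst φ₂ x ψ)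
  | and φ₁ φ₂, x, ψ => and (subst φ₁ x ψ) (subst φ₂ x ψ)
  | dia φ, x, ψ => dia (subst φ x ψ)
  | box φ, x, ψ => box (subst φ x ψ)
  | mu y φ, x, ψ => if y = x then mu y φ else mu y (subst φ x ψ)
  | nu y φ, x, ψ => if y = x then nu y φ else nu y (subst φ x ψ)

def bot : Formula := and (atom 0) (natom 0)
def top : Formula := or (atom 0) (natom 0)
def impl (φ ψ : Formula) : Formula := or (neg φ) ψ
def iffF (φ ψ : Formula) : Formula := and (impl φ ψ) (impl ψ φ)

end Formula

open Formula

/-- the Fischer-Ladner closure (as an inductively defined predicate) -/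
inductive FL (Φ : Set Formula) : Formula → Prop
  | base : ∀ {φ}, φ ∈ Φ → FL Φ φ
  | natom : ∀ {p}, FL Φ (.natom p) → FL Φ (.atom p)
  | orL : ∀ {φ ψ}, FL Φ (.or φ ψ) → FL Φ φ
  | orR : ∀ {φ ψ}, FL Φ (.or φ ψ) → FL Φ ψ
  | andL : ∀ {φ ψ}, FL Φ (.and φ ψ) → FL Φ φ
  | andR : ∀ {φ ψ}, FL Φ (.and φ ψ) → FL Φ ψ
  | dia : ∀ {φ}, FL Φ (.dia φ) → FL Φ φ
  | box : ∀ {φ}, FL Φ (.box φ) → FL Φ φ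
  | mu : ∀ {x φ}, FL Φ (.mu x φ) → FL Φ (subst φ x (.mu x φ))
  | nu : ∀ {x φ}, FL Φ (.nu x φ) → FL Φ (subst φ x (.nu x φ))

/-- `Cl Φ` : the FL-closure of `Φ` -/
def Cl (Φ : Set Formula) : Set Formula := {φ | FL Φ φ}

def FLClosed (Sg : Set Formula) : Prop := ∀ φ, FL Sg φ → φ ∈ Sg

/-- the subformula relation `⊴` -/
inductive Subf : Formula → Formula → Prop
  | refl : ∀ φ, Subf φ φ
  | orL : ∀ {φ ψ₁ ψ₂}, Subf φ ψ₁ → Subf φ (.or ψ₁ ψ₂)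
  | orR : ∀ {φ ψ₁ ψ₂}, Subf φ ψ₂ → Subf φ (.or ψ₁ ψ₂)
  | andL : ∀ {φ ψ₁ ψ₂}, Subf φ ψ₁ → Subf φ (.and ψ₁ ψ₂)
  | andR : ∀ {φ ψ₁ ψ₂}, Subf φ ψ₂ → Subf φ (.and ψ₁ ψ₂)
  | dia : ∀ {φ ψ}, Subf φ ψ → Subf φ (.dia ψ)
  | box : ∀ {φ ψ}, Subf φ ψ → Subf φ (.box ψ)
  | mu : ∀ {φ x ψ}, Subf φ ψ → Subf φ (.mu x ψ)
  | nu : ∀ {φ x ψ}, Subf φ ψ → Subf φ (.nu x ψ)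

/-- strict subformula `⊲` -/
def SSubf (φ ψ : Formula) : Prop := Subf φ ψ ∧ φ ≠ ψ

/-- a formula is tidy if its free and bound variables are disjoint -/
def Tidy (φ : Formula) : Prop := Disjoint (fv φ) (bv φ)

/-- a formula is clean if it is tidy and every bound variable has a unique binder -/
def Clean (φ : Formula) : Prop := Tidy φ ∧ (binders φ).Nodup

/-- `x` has binder `μ` in `ξ` -/
def MuVar (ξ : Formula) (x : ℕ) : Prop := ∃ δ, Subf (.mu x δ) ξ
/-- `x` has binder `ν` in `ξ` -/
def NuVar (ξ : Formula) (x : ℕ) : Prop := ∃ δ, Subf (.nu x δ) ξ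

/-- base of the dependency order: `x <_ξ y` whenever `δ_x ⊲ δ_y` and `y ⊲ δ_x` -/
def depBase (ξ : Formula) (x y : ℕ) : Prop :=
  ∃ δx δy : Formula,
    (Subf (.mu x δx) ξ ∨ Subf (.nu x δx) ξ) ∧
    (Subf (.mu y δy) ξ ∨ Subf (.nu y δy) ξ) ∧
    SSubf δx δy ∧ SSubf (.atom y) δx

/-- the dependency order `<_ξ` : the least strict partial order containing `depBase` -/
def dep (ξ : Formula) : ℕ → ℕ → Prop := Relation.TransGen (depBase ξ)

mutual
  /-- membership in the continuous modal μ-calculus `μ_cML` -/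
  inductive MuC : Formula → Prop
    | atom : ∀ p, MuC (.atom p)
    | natom : ∀ p, MuC (.natom p)
    | or : ∀ {φ ψ}, MuC φ → MuC ψ → MuC (.or φ ψ)
    | and : ∀ {φ ψ}, MuC φ → MuC ψ → MuC (.and φ ψ)
    | dia : ∀ {φ}, MuC φ → MuC (.dia φ)
    | box : ∀ {φ}, MuC φ → MuC (.box φ)
    | mu : ∀ {x φ}, ContIn ({x} : Set ℕ) φ → MuC (.mu x φ)
    | nu : ∀ {x φ}, CoconIn ({x} : Set ℕ) φ → MuC (.nu x φ)
  /-- the fragment of `μ_cML`-formulas continuous in `X` -/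
  inductive ContIn : Set ℕ → Formula → Prop
    | var : ∀ {X x}, x ∈ X → ContIn X (.atom x)
    | free : ∀ {X α}, MuC α → (∀ x ∈ X, x ∉ fv α) → ContIn X α
    | or : ∀ {X φ ψ}, ContIn X φ → ContIn X ψ → ContIn X (.or φ ψ)
    | and : ∀ {X φ ψ}, ContIn X φ → ContIn X ψ → ContIn X (.and φ ψ)
    | dia : ∀ {X φ}, ContIn X φ → ContIn X (.dia φ)
    | mu : ∀ {X y φ}, ContIn (insert y X) φ → ContIn X (.mu y φ)
  /-- the fragment of `μ_cML`-formulas cocontinuous in `X` -/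
  inductive CoconIn : Set ℕ → Formula → Prop
    | var : ∀ {X x}, x ∈ X → CoconIn X (.atom x)
    | free : ∀ {X α}, MuC α → (∀ x ∈ X, x ∉ fv α) → CoconIn X α
    | or : ∀ {X φ ψ}, CoconIn X φ → CoconIn X ψ → CoconIn X (.or φ ψ)
    | and : ∀ {X φ ψ}, CoconIn X φ → CoconIn X ψ → CoconIn X (.and φ ψ)
    | box : ∀ {X φ}, CoconIn X φ → CoconIn X (.box φ)
    | nu : ∀ {X y φ}, CoconIn (insert y X) φ → CoconIn X (.nu y φ)
end

/-- a basic modal formula: no fixpoint operators -/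
def IsBasic : Formula → Prop
  | .or φ ψ => IsBasic φ ∧ IsBasic ψ
  | .and φ ψ => IsBasic φ ∧ IsBasic ψ
  | .dia φ => IsBasic φ
  | .box φ => IsBasic φ
  | .mu _ _ => False
  | .nu _ _ => False
  | _ => True

/- ########  Semantics  ######## -/

/-- algebraic semantics: the meaning of a formula, relative to a valuation -/
def sem {S : Type} (R : S → S → Prop) : Formula → (ℕ → Set S) → Set S
  | .atom p, V => V p
  | .natom p, V => (V p)ᶜ
  | .or φ ψ, V => sem R φ V ∪ sem R ψ V
  | .and φ ψ, V => sem R φ V ∩ sem R ψ V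
  | .dia φ, V => {s | ∃ t, R s t ∧ t ∈ sem R φ V}
  | .box φ, V => {s | ∀ t, R s t → t ∈ sem R φ V}
  | .mu x φ, V => ⋂₀ {X : Set S | sem R φ (Function.update V x X) ⊆ X}
  | .nu x φ, V => ⋃₀ {X : Set S | X ⊆ sem R φ (Function.update V x X)}

/-- Kripke models -/
structure KModel where
  S : Type
  R : S → S → Prop
  V : ℕ → Set S

/-- Kripke frames -/
structure KFrame where
  S : Type
  R : S → S → Prop

def sat (M : KModel) (s : M.S) (φ : Formula) : Prop := s ∈ sem M.R φ M.V

def validM (M : KModel) (φ : Formula) : Prop := ∀ s, sat M s φ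

def validF (F : KFrame) (φ : Formula) : Prop := ∀ (V : ℕ → Set F.S) (s : F.S), s ∈ sem F.R φ V

def frameOf (M : KModel) : KFrame := ⟨M.S, M.R⟩

/- ########  Filtration  ######## -/

/-- Σ-equivalence: satisfying the same formulas of `Sg` -/
def fEquiv (M : KModel) (Sg : Finset Formula) : Setoid M.S :=
  ⟨fun s t => ∀ φ ∈ Sg, (sat M s φ ↔ sat M t φ),
   ⟨fun _ _ _ => Iff.rfl, fun h φ hφ => (h φ hφ).symm,
    fun h1 h2 φ hφ => (h1 φ hφ).trans (h2 φ hφ)⟩⟩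

def FStates (M : KModel) (Sg : Finset Formula) : Type := Quotient (fEquiv M Sg)

def fcls (M : KModel) (Sg : Finset Formula) (s : M.S) : FStates M Sg :=
  Quotient.mk (fEquiv M Sg) s

/-- a filtration of `M` through `Sg`: a relation between `R^min` and `R^max`,
with the induced valuation on atoms of `Sg` -/
structure Filtration (M : KModel) (Sg : Finset Formula) where
  R' : FStates M Sg → FStates M Sg → Prop
  V' : ℕ → Set (FStates M Sg)
  rmin : ∀ s t : M.S, M.R s t → R' (fcls M Sg s) (fcls M Sg t)
  rmax : ∀ s t : M.S, R' (fcls M Sg s) (fcls M Sg t) →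
      ∀ φ, Formula.box φ ∈ Sg → sat M s (.box φ) → sat M t φ
  hv : ∀ p, Formula.atom p ∈ Sg → ∀ s : M.S, (fcls M Sg s ∈ V' p ↔ s ∈ M.V p)

def filtModel (M : KModel) (Sg : Finset Formula) (F : Filtration M Sg) : KModel :=
  ⟨FStates M Sg, F.R', F.V'⟩

/-- a class of models admits filtration with respect to a language `D` -/
def AdmFilt (Mcl : KModel → Prop) (D : Formula → Prop) : Prop :=
  ∀ M, Mcl M → ∀ Sg : Finset Formula, FLClosed ↑Sg → (∀ φ ∈ Sg, D φ) →
    ∃ F : Filtration M Sg, Mcl (filtModel M Sg F)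

/- ########  Proof systems  ######## -/

/-- propositional evaluation (modal/fixpoint formulas treated as atoms) -/
def beval (v : Formula → Bool) : Formula → Bool
  | .atom p => v (.atom p)
  | .natom p => !v (.atom p)
  | .or φ ψ => beval v φ || beval v ψ
  | .and φ ψ => beval v φ && beval v ψ
  | φ => v φ

/-- the basic normal modal logic axiomatised by `Ax` -/
inductive BPrf (Ax : Set Formula) : Formula → Prop
  | ax : ∀ {φ}, φ ∈ Ax → BPrf Ax φ
  | taut : ∀ {φ}, (∀ v, beval v φ = true) → BPrf Ax φ
  | norm : BPrf Ax (neg (.dia bot))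
  | addL : ∀ {φ ψ}, BPrf Ax (impl (.dia (.or φ ψ)) (.or (.dia φ) (.dia ψ)))
  | addR : ∀ {φ ψ}, BPrf Ax (impl (.or (.dia φ) (.dia ψ)) (.dia (.or φ ψ)))
  | dual1 : ∀ {φ}, BPrf Ax (impl (.dia φ) (neg (.box (neg φ))))
  | dual2 : ∀ {φ}, BPrf Ax (impl (neg (.box (neg φ))) (.dia φ))
  | mp : ∀ {φ ψ}, BPrf Ax (impl φ ψ) → BPrf Ax φ → BPrf Ax ψ
  | mono : ∀ {φ ψ}, BPrf Ax (impl φ ψ) → BPrf Ax (impl (.dia φ) (.dia ψ))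
  | monoBox : ∀ {φ ψ}, BPrf Ax (impl φ ψ) → BPrf Ax (impl (.box φ) (.box ψ))
  | nec : ∀ {φ}, BPrf Ax φ → BPrf Ax (.box φ)
  | usubst : ∀ {φ x ψ}, BPrf Ax φ → BPrf Ax (subst φ x ψ)

/-- the μ_c-logic axiomatised by `Ax` : the least extension of `μ_c K` by the axioms
`Ax` closed under the rules -/
inductive Prf (Ax : Set Formula) : Formula → Prop
  | ax : ∀ {φ}, φ ∈ Ax → Prf Ax φ
  | taut : ∀ {φ}, (∀ v, beval v φ = true) → Prf Ax φ
  | norm : Prf Ax (neg (.dia bot))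
  | addL : ∀ {φ ψ}, Prf Ax (impl (.dia (.or φ ψ)) (.or (.dia φ) (.dia ψ)))
  | addR : ∀ {φ ψ}, Prf Ax (impl (.or (.dia φ) (.dia ψ)) (.dia (.or φ ψ)))
  | dual1 : ∀ {φ}, Prf Ax (impl (.dia φ) (neg (.box (neg φ))))
  | dual2 : ∀ {φ}, Prf Ax (impl (neg (.box (neg φ))) (.dia φ))
  | mp : ∀ {φ ψ}, Prf Ax (impl φ ψ) → Prf Ax φ → Prf Ax ψ
  | mono : ∀ {φ ψ}, Prf Ax (impl φ ψ) → Prf Ax (impl (.dia φ) (.dia ψ))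
  | monoBox : ∀ {φ ψ}, Prf Ax (impl φ ψ) → Prf Ax (impl (.box φ) (.box ψ))
  | nec : ∀ {φ}, Prf Ax φ → Prf Ax (.box φ)
  | usubst : ∀ {φ x ψ}, Prf Ax φ → Prf Ax (subst φ x ψ)
  | prefixAx : ∀ {x φ}, ContIn ({x} : Set ℕ) φ → Prf Ax (impl (subst φ x (.mu x φ)) (.mu x φ))
  | lfp : ∀ {x φ γ}, ContIn ({x} : Set ℕ) φ → Prf Ax (impl (subst φ x γ) γ) → Prf Ax (impl (.mu x φ) γ)
  | postfixAx : ∀ {x φ}, CoconIn ({x} : Set ℕ) φ → Prf Ax (impl (.nu x φ) (subst φ x (.nu x φ)))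
  | gfp : ∀ {x φ γ}, CoconIn ({x} : Set ℕ) φ → Prf Ax (impl γ (subst φ x γ)) → Prf Ax (impl γ (.nu x φ))

/- ########  Consistency and (finitary) canonical models  ######## -/

def conjList : List Formula → Formula
  | [] => top
  | φ :: l => .and φ (conjList l)

/-- `Γ` is inconsistent wrt a provability predicate `P` -/
def Incons (P : Formula → Prop) (Γ : Set Formula) : Prop :=
  ∃ l : List Formula, (∀ φ ∈ l, φ ∈ Γ) ∧ P (impl (conjList l) bot)

def Cons (P : Formula → Prop) (Γ : Set Formula) : Prop := ¬ Incons P Γ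

def MaxCons (P : Formula → Prop) (Γ : Set Formula) : Prop :=
  Cons P Γ ∧ ∀ Γ' : Set Formula, Γ ⊂ Γ' → Incons P Γ'

/-- consistency of a single formula -/
def ConsF (P : Formula → Prop) (φ : Formula) : Prop := Cons P {φ}

/-- `ψ_A` : the conjunction of a finite set of formulas -/
noncomputable def conjF (A : Finset Formula) : Formula := conjList A.toList

/-- `ψ_U` : the disjunction of the conjunctions of the members of `U` -/
noncomputable def disjF (U : Finset (Finset Formula)) : Formula :=
  (U.toList.map conjF).foldr .or bot

/-- `∼`-closed and FL-closed -/
def NegFLClosed (Sg : Finset Formula) : Prop :=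
  FLClosed ↑Sg ∧ ∀ φ ∈ Sg, neg φ ∈ Sg

/-- the states of a model over `Sg` : intersections of maximally consistent sets with `Sg` -/
def States (P : Formula → Prop) (Sg : Finset Formula) : Set (Finset Formula) :=
  {A | ∃ Γ : Set Formula, MaxCons P Γ ∧ ↑A = Γ ∩ ↑Sg}

/-- a model over `Sg` with respect to the logic `P` -/
structure ModelOver (P : Formula → Prop) (Sg : Finset Formula) where
  R : Finset Formula → Finset Formula → Prop
  rmin : ∀ A ∈ States P Sg, ∀ B ∈ States P Sg,
      ConsF P (.and (conjF A) (.dia (conjF B))) → R A B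
  rmax : ∀ A ∈ States P Sg, ∀ B ∈ States P Sg, R A B →
      ∀ φ, Formula.box φ ∈ Sg → Formula.box φ ∈ A → φ ∈ B

/-- the Kripke model induced by a model over `Sg` -/
noncomputable def modelOf (P : Formula → Prop) (Sg : Finset Formula)
    (M : ModelOver P Sg) : KModel :=
  ⟨{A : Finset Formula // A ∈ States P Sg}, fun A B => M.R A.1 B.1,
   fun p => {A | Formula.atom p ∈ A.1}⟩

/-- the canonical frame of the logic `P` -/
def canFrame (P : Formula → Prop) : KFrame :=
  ⟨{Γ : Set Formula // MaxCons P Γ}, fun Γ Δ => ∀ φ, Formula.box φ ∈ Γ.1 → φ ∈ Δ.1⟩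

/-- the canonical model of the logic `P`, with an arbitrary valuation `V` -/
def canModelWith (P : Formula → Prop) (V : ℕ → Set {Γ : Set Formula // MaxCons P Γ}) :
    KModel :=
  ⟨{Γ : Set Formula // MaxCons P Γ}, fun Γ Δ => ∀ φ, Formula.box φ ∈ Γ.1 → φ ∈ Δ.1, V⟩

/-- the canonical model of the logic `P` -/
def canModel (P : Formula → Prop) : KModel :=
  canModelWith P (fun p => {Γ | Formula.atom p ∈ Γ.1})

/- ########  Expansions and name-expansions  ######## -/

/-- iterated substitution `φ[β₁/x₁]⋯[βₙ/xₙ]` -/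
def expandBy : List (ℕ × Formula) → Formula → Formula
  | [], φ => φ
  | (x, β) :: l, φ => expandBy l (subst φ x β)

/-- an enumeration of the bound variables of `ξ`, paired with their fixpoint formulas,
respecting the dependency order -/
structure GoodEnum (ξ : Formula) (l : List (ℕ × Formula)) : Prop where
  nodup : (l.map Prod.fst).Nodup
  mem : ∀ x, x ∈ l.map Prod.fst ↔ x ∈ bv ξ
  bind : ∀ p ∈ l, (∃ δ, p.2 = Formula.mu p.1 δ ∧ Subf p.2 ξ) ∨
                  (∃ δ, p.2 = Formula.nu p.1 δ ∧ Subf p.2 ξ)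
  resp : ∀ i j : Fin l.length, dep ξ (l.get i).1 (l.get j).1 → (i : ℕ) < (j : ℕ)

/-- the body `δ` of a fixpoint formula `ηx.δ` -/
def body : Formula → Formula
  | .mu _ δ => δ
  | .nu _ δ => δ
  | φ => φ

/-- name-expansion: substitute `u x` for each bound variable `x` in the list -/
def nexpBy (u : ℕ → Formula) : List ℕ → Formula → Formula
  | [], φ => φ
  | x :: l, φ => nexpBy u l (subst φ x (u x))

/-! `∼ψ` is exactly what uniform substitution of `ψ` for `x` puts at the negative occurrences
`¬x`, so both equivalences are substitution instances of the propositional tautologies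
`(¬x ∧ x) ↔ ⊥` and `(¬x ∨ x) ↔ ⊤`, once `∼` is known to be an involution. -/

namespace Formula

theorem negF_negF (X : Finset ℕ) (φ : Formula) : negF X (negF X φ) = φ := by
  induction φ generalizing X with
  | atom p | natom p => by_cases hp : p ∈ X <;> simp [negF, hp]
  | _ => simp_all [negF]

@[simp]
theorem neg_atom (p : ℕ) : neg (atom p) = natom p := rfl

@[simp]
theorem neg_natom (p : ℕ) : neg (natom p) = atom p := rfl

@[simp]
theorem neg_or (φ ψ : Formula) : neg (or φ ψ) = and (neg φ) (neg ψ) := rfl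

@[simp]
theorem neg_and (φ ψ : Formula) : neg (and φ ψ) = or (neg φ) (neg ψ) := rfl

@[simp]
theorem neg_neg (φ : Formula) : neg (neg φ) = φ := negF_negF ∅ φ

end Formula

theorem Prf.subst_of_taut {Ax : Set Formula} {τ : Formula} (hτ : ∀ v, beval v τ = true)
    (x : ℕ) (ψ : Formula) : Prf Ax (subst τ x ψ) :=
  Prf.usubst (Prf.taut hτ)

/-- Every μ_c-logic proves `(∼φ ∧ φ) ↔ ⊥` and `(∼φ ∨ φ) ↔ ⊤`. -/
theorem neg_complement (Ax : Set Formula) (φ : Formula) :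
    Prf Ax (iffF (.and (neg φ) φ) bot) ∧ Prf Ax (iffF (.or (neg φ) φ) top) := by
  -- substitute for the variable `1`, since `bot` and `top` are built from the atom `0`
  have noncontradiction : Prf Ax (subst (iffF (.and (.natom 1) (.atom 1)) bot) 1 φ) :=
    Prf.subst_of_taut (by simp [iffF, impl, bot, beval]) 1 φ
  have excluded_middle : Prf Ax (subst (iffF (.or (.natom 1) (.atom 1)) top) 1 φ) :=
    Prf.subst_of_taut (by simp [iffF, impl, top, beval]) 1 φ
  constructor
  · simpa [iffF, impl, subst, bot] using noncontradiction
  · simpa [iffF, impl, subst, top] using excluded_middle
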